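/- Let ρ > 0 and p₁ = (x₁, y₁) ∈ ℝ² with d₁₂ := ‖p₁‖ ≥ 2ρ. Define L₁(θ) = √(d₁₂² − 2ρ(x₁ sin θ − y₁ cos θ)), φ₁(θ) = atan2(y₁ + ρ cos θ, x₁ − ρ sin θ) + arctan(ρ / L₁(θ)), and D₁(θ) = ρ(φ₁(θ) − θ − π) + L₁(θ), which is the length of the SR Dubins path from p₁ to the origin arriving with heading θ (obtained by reversing the LS path that starts at the origin with heading θ + π, turns left along the circle of radius ρ centered at (ρ sin θ, −ρ cos θ) through angle τ₁(θ) = φ₁(θ) − θ − π, and goes straight to p₁). Then on any open interval of θ on which L₁(θ) > 0 and φ₁(θ) − θ − π ∈ (0, 2π), the function D₁ is differentiable and D₁′(θ) = −ρ(1 − cos(φ₁(θ) − θ − π)). In particular −2ρ ≤ D₁′(θ) ≤ 0. -/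

import Mathlib

/-- Four-quadrant arctangent: `atan2 y x` is the argument of the complex number `x + y i`. -/
noncomputable def atan2 (y x : ℝ) : ℝ := Complex.arg ⟨x, y⟩

/-- Tangent-segment length of the SR Dubins path from `p₁ = (x₁, y₁)` to the origin
arriving with heading `θ`: `L₁(θ) = √(‖p₁‖² − 2ρ(x₁ sin θ − y₁ cos θ))`. -/
noncomputable def Lsr (ρ x₁ y₁ θ : ℝ) : ℝ :=
  Real.sqrt (Real.sqrt (x₁ ^ 2 + y₁ ^ 2) ^ 2 - 2 * ρ * (x₁ * Real.sin θ - y₁ * Real.cos θ))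

/-- Heading along the straight segment of the reversed (LS) path:
`φ₁(θ) = atan2(y₁ + ρ cos θ, x₁ − ρ sin θ) + arctan(ρ / L₁(θ))`. -/
noncomputable def φsr (ρ x₁ y₁ θ : ℝ) : ℝ :=
  atan2 (y₁ + ρ * Real.cos θ) (x₁ - ρ * Real.sin θ) + Real.arctan (ρ / Lsr ρ x₁ y₁ θ)

/-- Total SR Dubins path length `D₁(θ) = ρ(φ₁(θ) − θ − π) + L₁(θ)`. -/
noncomputable def Dsr (ρ x₁ y₁ θ : ℝ) : ℝ :=
  ρ * (φsr ρ x₁ y₁ θ - θ - Real.pi) + Lsr ρ x₁ y₁ θ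


/-!
Write `D₁ = (L₁ + ρ φ₁) - ρ θ - ρ π`. Since `p₁ = c(θ) + ρ (sin φ₁, -cos φ₁) + L₁ (cos φ₁, sin φ₁)`,
differentiating in `θ` and projecting onto the heading `(cos φ₁, sin φ₁)` gives
`(L₁ + ρ φ₁)' = c'(θ) · (cos φ₁, sin φ₁) = -ρ cos (φ₁ - θ)`, hence
`D₁' = -ρ (1 + cos (φ₁ - θ)) = -ρ (1 - cos τ₁)`.
The `atan2` in `φ₁` has a branch cut, but `τ₁ ∈ (0, 2π)` confines `φ₁(t) - t` to a window of
width `2π`, on which `φ₁` is recovered smoothly from `cos φ₁` and `sin φ₁`.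
-/

open Real Set Filter Topology

/- Near `x`, `f - g = arg (exp ((f - g) i))`, and the curve `exp ((f - g) i)` is differentiable and
stays off the branch cut of `arg`. -/
theorem differentiableAt_of_cos_sin {f g : ℝ → ℝ} {x : ℝ} (hg : DifferentiableAt ℝ g x)
    (hf : ∀ᶠ t in 𝓝 x, f t - g t ∈ Ioo (-π) π)
    (hcos : DifferentiableAt ℝ (fun t => cos (f t)) x)
    (hsin : DifferentiableAt ℝ (fun t => sin (f t)) x) :
    DifferentiableAt ℝ f x := by
  set w : ℝ → ℂ := fun t =>
    ((cos (f t) : ℂ) + (sin (f t) : ℂ) * Complex.I) * Complex.exp (-(g t : ℂ) * Complex.I)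
  have hw_exp : ∀ t, w t = Complex.exp ((f t - g t : ℝ) * Complex.I) := fun t => by
    simp only [w, Complex.ofReal_cos, Complex.ofReal_sin, ← Complex.exp_mul_I, ← Complex.exp_add,
      Complex.ofReal_sub]
    ring_nf
  have harg : ∀ {t}, f t - g t ∈ Ioo (-π) π → (w t).arg = f t - g t := fun ht => by
    rw [hw_exp, Complex.arg_exp_mul_I, toIocMod_eq_self]
    exact ⟨ht.1, by linarith [ht.2]⟩
  have hslit : w x ∈ Complex.slitPlane := by
    rw [Complex.mem_slitPlane_iff_arg, harg hf.self_of_nhds, hw_exp]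
    exact ⟨hf.self_of_nhds.2.ne, Complex.exp_ne_zero _⟩
  have hw : DifferentiableAt ℝ w x := by fun_prop
  have hlog : DifferentiableAt ℝ (fun t => g t + (Complex.log (w t)).im) x :=
    hg.add <| Complex.imCLM.differentiableAt.comp x
      (((Complex.differentiableAt_log hslit).restrictScalars ℝ).comp x hw)
  refine hlog.congr_of_eventuallyEq ?_
  filter_upwards [hf] with t ht
  rw [Complex.log_im, harg ht]
  ring

theorem sqrt_mul_cos_sin_arctan_div {L : ℝ} (ρ : ℝ) (hL : 0 < L) :
    √(L ^ 2 + ρ ^ 2) * cos (arctan (ρ / L)) = L ∧ √(L ^ 2 + ρ ^ 2) * sin (arctan (ρ / L)) = ρ := by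
  have hR : √(L ^ 2 + ρ ^ 2) = L * √(1 + (ρ / L) ^ 2) := by
    rw [← sqrt_sq hL.le, ← sqrt_mul (sq_nonneg _), sqrt_sq hL.le]
    congr 1
    field_simp
  have hpos : 0 < √(1 + (ρ / L) ^ 2) := sqrt_pos.2 (by positivity)
  rw [hR, cos_arctan, sin_arctan]
  constructor <;> field_simp

theorem mul_cos_sin_add_arctan_div (ψ ρ : ℝ) {L : ℝ} (hL : 0 < L) :
    L * cos (ψ + arctan (ρ / L)) + ρ * sin (ψ + arctan (ρ / L)) = √(L ^ 2 + ρ ^ 2) * cos ψ ∧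
    L * sin (ψ + arctan (ρ / L)) - ρ * cos (ψ + arctan (ρ / L)) = √(L ^ 2 + ρ ^ 2) * sin ψ := by
  obtain ⟨hc, hs⟩ := sqrt_mul_cos_sin_arctan_div ρ hL
  set α := arctan (ρ / L)
  have hψ : ψ = (ψ + α) - α := by ring
  rw [hψ, cos_sub, sin_sub, add_sub_cancel_right]
  constructor
  · linear_combination (-cos (ψ + α)) * hc - sin (ψ + α) * hs
  · linear_combination (-sin (ψ + α)) * hc + cos (ψ + α) * hs

/- Differentiate `(u, v) = L (cos φ, sin φ) + ρ (sin φ, -cos φ)` and project onto `(cos φ, sin φ)`. -/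
theorem hasDerivAt_add_mul_of_eventuallyEq {L φ u v : ℝ → ℝ} {ρ u' v' x : ℝ}
    (hL : DifferentiableAt ℝ L x) (hφ : DifferentiableAt ℝ φ x)
    (hu : HasDerivAt u u' x) (hv : HasDerivAt v v' x)
    (hu_eq : u =ᶠ[𝓝 x] fun t => L t * cos (φ t) + ρ * sin (φ t))
    (hv_eq : v =ᶠ[𝓝 x] fun t => L t * sin (φ t) - ρ * cos (φ t)) :
    HasDerivAt (fun t => L t + ρ * φ t) (u' * cos (φ x) + v' * sin (φ x)) x := by
  have hL' := hL.hasDerivAt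
  have hφ' := hφ.hasDerivAt
  have eu := hu.unique (((hL'.mul hφ'.cos).add (hφ'.sin.const_mul ρ)).congr_of_eventuallyEq hu_eq)
  have ev := hv.unique (((hL'.mul hφ'.sin).sub (hφ'.cos.const_mul ρ)).congr_of_eventuallyEq hv_eq)
  refine (hL'.add (hφ'.const_mul ρ)).congr_deriv ?_
  linear_combination (-cos (φ x)) * eu - sin (φ x) * ev
    - (deriv L x + ρ * deriv φ x) * sin_sq_add_cos_sq (φ x)

section

variable {ρ x y θ : ℝ}

theorem Lsr_eq_sqrt : Lsr ρ x y θ = √(x ^ 2 + y ^ 2 - 2 * ρ * (x * sin θ - y * cos θ)) := by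
  rw [Lsr, sq_sqrt (by positivity)]

theorem Lsr_sq (hL : 0 < Lsr ρ x y θ) :
    Lsr ρ x y θ ^ 2 = x ^ 2 + y ^ 2 - 2 * ρ * (x * sin θ - y * cos θ) := by
  rw [Lsr_eq_sqrt] at hL ⊢
  exact sq_sqrt (sqrt_pos.1 hL).le

theorem differentiableAt_Lsr (hL : 0 < Lsr ρ x y θ) : DifferentiableAt ℝ (Lsr ρ x y) θ := by
  rw [Lsr_eq_sqrt, sqrt_pos] at hL
  rw [show Lsr ρ x y = _ from funext fun t => Lsr_eq_sqrt]
  exact DifferentiableAt.sqrt (by fun_prop) hL.ne'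

/- `p₁ - c(θ)` is the radius `ρ (sin φ, -cos φ)` to the tangent point plus the segment
`L (cos φ, sin φ)`: in polar form `p₁ - c(θ) = √(L² + ρ²) e^{i ψ}` with `ψ = atan2 …`, and
`φ = ψ + arctan (ρ / L)`. -/
theorem sub_center_eq_of_Lsr_pos (hL : 0 < Lsr ρ x y θ) :
    x - ρ * sin θ = Lsr ρ x y θ * cos (φsr ρ x y θ) + ρ * sin (φsr ρ x y θ) ∧
    y + ρ * cos θ = Lsr ρ x y θ * sin (φsr ρ x y θ) - ρ * cos (φsr ρ x y θ) := by
  set z : ℂ := ⟨x - ρ * sin θ, y + ρ * cos θ⟩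
  have hz : ‖z‖ = √(Lsr ρ x y θ ^ 2 + ρ ^ 2) := by
    rw [Complex.norm_def, Complex.normSq_mk, Lsr_sq hL]
    congr 1
    linear_combination ρ ^ 2 * sin_sq_add_cos_sq θ
  obtain ⟨hc, hs⟩ := mul_cos_sin_add_arctan_div z.arg ρ hL
  rw [← hz, Complex.norm_mul_cos_arg] at hc
  rw [← hz, Complex.norm_mul_sin_arg] at hs
  exact ⟨hc.symm, hs.symm⟩

theorem differentiableAt_φsr (hL : ∀ᶠ t in 𝓝 θ, 0 < Lsr ρ x y t)
    (hτ : ∀ᶠ t in 𝓝 θ, φsr ρ x y t - t - π ∈ Ioo 0 (2 * π)) :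
    DifferentiableAt ℝ (φsr ρ x y) θ := by
  have hLd := differentiableAt_Lsr hL.self_of_nhds
  have hcos : (fun t => cos (φsr ρ x y t)) =ᶠ[𝓝 θ] fun t =>
      (Lsr ρ x y t * (x - ρ * sin t) - ρ * (y + ρ * cos t)) / (Lsr ρ x y t ^ 2 + ρ ^ 2) := by
    filter_upwards [hL] with t ht
    obtain ⟨hu, hv⟩ := sub_center_eq_of_Lsr_pos ht
    rw [eq_div_iff (by positivity), hu, hv]
    ring
  have hsin : (fun t => sin (φsr ρ x y t)) =ᶠ[𝓝 θ] fun t =>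
      (Lsr ρ x y t * (y + ρ * cos t) + ρ * (x - ρ * sin t)) / (Lsr ρ x y t ^ 2 + ρ ^ 2) := by
    filter_upwards [hL] with t ht
    obtain ⟨hu, hv⟩ := sub_center_eq_of_Lsr_pos ht
    rw [eq_div_iff (by positivity), hu, hv]
    ring
  have hden : Lsr ρ x y θ ^ 2 + ρ ^ 2 ≠ 0 := by have := hL.self_of_nhds; positivity
  refine differentiableAt_of_cos_sin (g := fun t => t + 2 * π) (by fun_prop) ?_
    (hcos.differentiableAt_iff.2 (by fun_prop (disch := exact hden)))
    (hsin.differentiableAt_iff.2 (by fun_prop (disch := exact hden)))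
  filter_upwards [hτ] with t ht
  constructor <;> linarith [ht.1, ht.2]

theorem hasDerivAt_Dsr (hL : ∀ᶠ t in 𝓝 θ, 0 < Lsr ρ x y t)
    (hτ : ∀ᶠ t in 𝓝 θ, φsr ρ x y t - t - π ∈ Ioo 0 (2 * π)) :
    HasDerivAt (Dsr ρ x y) (-(ρ * (1 - cos (φsr ρ x y θ - θ - π)))) θ := by
  have hu : HasDerivAt (fun t => x - ρ * sin t) (-ρ * cos θ) θ := by
    simpa using ((hasDerivAt_sin θ).const_mul ρ).const_sub x
  have hv : HasDerivAt (fun t => y + ρ * cos t) (-ρ * sin θ) θ := by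
    simpa using ((hasDerivAt_cos θ).const_mul ρ).const_add y
  have hLφ := hasDerivAt_add_mul_of_eventuallyEq (differentiableAt_Lsr hL.self_of_nhds)
    (differentiableAt_φsr hL hτ) hu hv
    (hL.mono fun t ht => (sub_center_eq_of_Lsr_pos ht).1)
    (hL.mono fun t ht => (sub_center_eq_of_Lsr_pos ht).2)
  have hD : Dsr ρ x y = fun t => (Lsr ρ x y t + ρ * φsr ρ x y t) - ρ * t - ρ * π := by
    funext t
    rw [Dsr]
    ring
  rw [hD]
  refine ((hLφ.sub ((hasDerivAt_id θ).const_mul ρ)).sub_const _).congr_deriv ?_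
  rw [sub_sub, cos_sub, cos_add_pi, sin_add_pi]
  ring

end

theorem stmt7_general (ρ x₁ y₁ a b : ℝ) (hρ : 0 < ρ)
    (hL : ∀ θ ∈ Set.Ioo a b, 0 < Lsr ρ x₁ y₁ θ)
    (hτ : ∀ θ ∈ Set.Ioo a b, φsr ρ x₁ y₁ θ - θ - Real.pi ∈ Set.Ioo 0 (2 * Real.pi)) :
    ∀ θ ∈ Set.Ioo a b,
      HasDerivAt (Dsr ρ x₁ y₁) (-(ρ * (1 - Real.cos (φsr ρ x₁ y₁ θ - θ - Real.pi)))) θ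
      ∧ -(2 * ρ) ≤ -(ρ * (1 - Real.cos (φsr ρ x₁ y₁ θ - θ - Real.pi)))
      ∧ -(ρ * (1 - Real.cos (φsr ρ x₁ y₁ θ - θ - Real.pi))) ≤ 0 := by
  intro θ hθ
  have hnhds : Ioo a b ∈ 𝓝 θ := isOpen_Ioo.mem_nhds hθ
  have hcos_le := cos_le_one (φsr ρ x₁ y₁ θ - θ - π)
  have hcos_ge := neg_one_le_cos (φsr ρ x₁ y₁ θ - θ - π)
  exact ⟨hasDerivAt_Dsr (eventually_of_mem hnhds hL) (eventually_of_mem hnhds hτ),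
    by nlinarith, by nlinarith⟩

theorem stmt7 (ρ x₁ y₁ a b : ℝ) (hρ : 0 < ρ)
    (hd : 2 * ρ ≤ Real.sqrt (x₁ ^ 2 + y₁ ^ 2))
    (hL : ∀ θ ∈ Set.Ioo a b, 0 < Lsr ρ x₁ y₁ θ)
    (hτ : ∀ θ ∈ Set.Ioo a b, φsr ρ x₁ y₁ θ - θ - Real.pi ∈ Set.Ioo 0 (2 * Real.pi)) :
    ∀ θ ∈ Set.Ioo a b,
      HasDerivAt (Dsr ρ x₁ y₁) (-(ρ * (1 - Real.cos (φsr ρ x₁ y₁ θ - θ - Real.pi)))) θ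
      ∧ -(2 * ρ) ≤ -(ρ * (1 - Real.cos (φsr ρ x₁ y₁ θ - θ - Real.pi)))
      ∧ -(ρ * (1 - Real.cos (φsr ρ x₁ y₁ θ - θ - Real.pi))) ≤ 0 :=
  stmt7_general ρ x₁ y₁ a b hρ hL hτ
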